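/- arXiv:2102.08117 — 5 statements merged into one kernel-verified Lean document; each statement's English description precedes it below -/
import Mathlib

section
/- (Kato's lemma) Let H be a real Hilbert space and P : H → H a bounded linear idempotent operator (P² = P) with P ≠ 0 and P ≠ id. Then ‖id − P‖ = ‖P‖ (operator norms). -/
/-!
Write `x = u + v` with `u = P x` and `v = x - P x`, so that `P u = u` and `P v = 0`. The vector
`y = ‖v‖² • u + ‖u‖² • v` has norm `‖u‖ ‖v‖ ‖x‖` and `P y = ‖v‖² • u`, so `‖P y‖ ≤ ‖P‖ ‖y‖` reads
`‖v‖ ≤ ‖P‖ ‖x‖` whenever `u, v ≠ 0`; when `u = 0` it follows from `‖P‖ ≥ 1`. Hence `‖1 - P‖ ≤ ‖P‖`,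
and the reverse inequality is the same statement for the idempotent `1 - P`.
-/

theorem IsIdempotentElem.one_le_norm {R : Type*} [NonUnitalNormedRing R] {a : R}
    (h : IsIdempotentElem a) (ha : a ≠ 0) : 1 ≤ ‖a‖ := by
  have hpos : 0 < ‖a‖ := norm_pos_iff.mpr ha
  have hle : ‖a‖ ≤ ‖a‖ * ‖a‖ := by simpa only [h.eq] using norm_mul_le a a
  nlinarith

theorem norm_norm_sq_smul_add_norm_sq_smul {E : Type*} [NormedAddCommGroup E]
    [InnerProductSpace ℝ E] (u v : E) :
    ‖(‖v‖ ^ 2) • u + (‖u‖ ^ 2) • v‖ = ‖u‖ * ‖v‖ * ‖u + v‖ := by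
  refine (pow_left_inj₀ (norm_nonneg _) (by positivity) two_ne_zero).mp ?_
  rw [mul_pow, norm_add_sq_real, norm_add_sq_real, norm_smul, norm_smul,
    real_inner_smul_left, real_inner_smul_right, Real.norm_of_nonneg (by positivity),
    Real.norm_of_nonneg (by positivity)]
  ring

namespace ContinuousLinearMap

variable {E : Type*} [NormedAddCommGroup E] [InnerProductSpace ℝ E]

theorem norm_sub_apply_le_of_isIdempotentElem {P : E →L[ℝ] E} (hP : IsIdempotentElem P)
    (hP1 : 1 ≤ ‖P‖) (x : E) : ‖x - P x‖ ≤ ‖P‖ * ‖x‖ := by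
  set u := P x
  set v := x - P x
  rcases eq_or_ne u 0 with hu | hu
  · have hvx : v = x := by rw [show v = x - u from rfl, hu, sub_zero]
    rw [hvx]
    exact le_mul_of_one_le_left (norm_nonneg x) hP1
  rcases eq_or_ne v 0 with hv | hv
  · rw [hv, norm_zero]
    positivity
  have hPu : P u = u := congr($hP x)
  have hPv : P v = 0 := by rw [map_sub, hPu, sub_self]
  have hPy : P ((‖v‖ ^ 2) • u + (‖u‖ ^ 2) • v) = (‖v‖ ^ 2) • u := by
    rw [map_add, map_smul, map_smul, hPu, hPv, smul_zero, add_zero]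
  have key := P.le_opNorm ((‖v‖ ^ 2) • u + (‖u‖ ^ 2) • v)
  rw [hPy, norm_norm_sq_smul_add_norm_sq_smul, norm_smul, Real.norm_of_nonneg (by positivity),
    show u + v = x from add_sub_cancel _ _] at key
  have huv : 0 < ‖u‖ * ‖v‖ := mul_pos (norm_pos_iff.mpr hu) (norm_pos_iff.mpr hv)
  nlinarith

theorem norm_one_sub_le_of_isIdempotentElem {P : E →L[ℝ] E} (hP : IsIdempotentElem P)
    (h0 : P ≠ 0) : ‖1 - P‖ ≤ ‖P‖ :=
  opNorm_le_bound _ (norm_nonneg P) fun x =>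
    norm_sub_apply_le_of_isIdempotentElem hP (hP.one_le_norm h0) x

end ContinuousLinearMap

theorem kato_lemma_general {H : Type*} [NormedAddCommGroup H] [InnerProductSpace ℝ H]
    (P : H →L[ℝ] H) (hP : P ∘L P = P)
    (h0 : P ≠ 0) (h1 : P ≠ ContinuousLinearMap.id ℝ H) :
    ‖ContinuousLinearMap.id ℝ H - P‖ = ‖P‖ := by
  have hP' : IsIdempotentElem P := hP
  have hQ0 : 1 - P ≠ 0 := sub_ne_zero.mpr h1.symm
  rw [← ContinuousLinearMap.one_def]
  refine le_antisymm (ContinuousLinearMap.norm_one_sub_le_of_isIdempotentElem hP' h0) ?_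
  simpa only [sub_sub_cancel] using
    ContinuousLinearMap.norm_one_sub_le_of_isIdempotentElem hP'.one_sub hQ0

/-- Kato's lemma: a bounded idempotent `P ≠ 0, id` on a real Hilbert space
satisfies `‖id - P‖ = ‖P‖`. -/
theorem kato_lemma {H : Type*} [NormedAddCommGroup H] [InnerProductSpace ℝ H]
    [CompleteSpace H] (P : H →L[ℝ] H) (hP : P ∘L P = P)
    (h0 : P ≠ 0) (h1 : P ≠ ContinuousLinearMap.id ℝ H) :
    ‖ContinuousLinearMap.id ℝ H - P‖ = ‖P‖ :=
  kato_lemma_general P hP h0 h1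
end

section
/- Let H be a real Hilbert space, W a finite-dimensional subspace with orthogonal projection I : H → W, and J : W → H a linear right-inverse of I with Λ₀ := ‖id − J‖ (operator norm from W to H). Suppose u ∈ H and u_nc ∈ W satisfy the Petrov–Galerkin orthogonality ⟨u − u_nc, J w⟩ = 0 for all w ∈ W. Then ‖u − u_nc‖ ≤ √(1 + Λ₀²) · ‖u − I u‖. -/
open RealInnerProductSpace

/-- Quasi-optimality of the Petrov–Galerkin solution:
`‖u - u_nc‖ ≤ √(1 + Λ₀²) ‖u - I u‖` with `Λ₀ = ‖id - J‖`. -/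
theorem petrovGalerkin_quasiOptimal {H : Type*} [NormedAddCommGroup H] [InnerProductSpace ℝ H]
    [CompleteSpace H] (W : Submodule ℝ H) [FiniteDimensional ℝ W]
    (I : H →ₗ[ℝ] W) (hI : ∀ (v : H) (w : W), ⟪v - (I v : H), (w : H)⟫ = 0)
    (J : W →L[ℝ] H) (hJ : ∀ w : W, I (J w) = w)
    (u : H) (unc : W) (h : ∀ w : W, ⟪u - (unc : H), J w⟫ = 0) :
    ‖u - (unc : H)‖ ≤ Real.sqrt (1 + ‖W.subtypeL - J‖ ^ 2) * ‖u - (I u : H)‖ := by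
  set Λ := ‖W.subtypeL - J‖ with hΛ
  set d := u - (I u : H) with hd
  set w : W := I u - unc with hwdef
  have hΛ0 : 0 ≤ Λ := by rw [hΛ]; exact norm_nonneg (W.subtypeL - J)
  -- J a - a is orthogonal to W
  have hperp : ∀ a b : W, ⟪J a - (a : H), (b : H)⟫ = 0 := by
    intro a b
    have := hI (J a) b
    rwa [hJ] at this
  -- decomposition
  have hdec : u - (unc : H) = d + (w : H) := by
    simp [hd, hwdef]
  have key1 : ⟪d, (w : H)⟫ = 0 := hI u w
  have hcoe : (w : H) - J w = (W.subtypeL - J) w := by simp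
  have hwJ : ‖(w : H) - J w‖ ≤ Λ * ‖w‖ := by
    rw [hcoe]; exact (W.subtypeL - J).le_opNorm w
  -- key identity ‖w‖² = ⟪d, w - Jw⟫
  have key2 : ‖(w : H)‖ ^ 2 = ⟪d, (w : H) - J w⟫ := by
    have h1 : ⟪u - (unc : H), (w : H) - J w⟫ = ⟪u - (unc : H), (w : H)⟫ := by
      rw [inner_sub_right, h w, sub_zero]
    have h2 : ⟪u - (unc : H), (w : H)⟫ = ‖(w : H)‖ ^ 2 := by
      rw [hdec, inner_add_left, key1, zero_add, real_inner_self_eq_norm_sq]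
    have h3 : ⟪(w : H), (w : H) - J w⟫ = 0 := by
      have h0 := hperp w w
      have h0' : ⟪(w : H) - J w, (w : H)⟫ = 0 := by
        rw [← neg_sub, inner_neg_left, h0, neg_zero]
      rw [real_inner_comm]; exact h0'
    have h4 : ⟪u - (unc : H), (w : H) - J w⟫
        = ⟪d, (w : H) - J w⟫ + ⟪(w : H), (w : H) - J w⟫ := by
      rw [hdec, inner_add_left]
    rw [← h2, ← h1, h4, h3, add_zero]
  -- ‖w‖ ≤ Λ * ‖d‖
  have hwle : ‖(w : H)‖ ≤ Λ * ‖d‖ := by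
    rcases eq_or_lt_of_le (norm_nonneg ((w : H))) with h0 | h0
    · rw [← h0]; positivity
    · have : ‖(w : H)‖ ^ 2 ≤ ‖d‖ * (Λ * ‖(w : H)‖) := by
        calc ‖(w : H)‖ ^ 2 = ⟪d, (w : H) - J w⟫ := key2
          _ ≤ ‖d‖ * ‖(w : H) - J w‖ := real_inner_le_norm _ _
          _ ≤ ‖d‖ * (Λ * ‖w‖) := by
              exact mul_le_mul_of_nonneg_left hwJ (norm_nonneg _)
          _ = ‖d‖ * (Λ * ‖(w : H)‖) := by rw [Submodule.norm_coe]
      nlinarith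
  -- Pythagoras
  have hpyth : ‖u - (unc : H)‖ ^ 2 = ‖d‖ ^ 2 + ‖(w : H)‖ ^ 2 := by
    rw [hdec, norm_add_sq_real, key1]; ring
  have hbound : ‖u - (unc : H)‖ ^ 2 ≤ (1 + Λ ^ 2) * ‖d‖ ^ 2 := by
    rw [hpyth]
    nlinarith [norm_nonneg d, norm_nonneg ((w : H))]
  have := Real.sqrt_le_sqrt hbound
  rwa [Real.sqrt_sq (norm_nonneg _), Real.sqrt_mul (by positivity),
    Real.sqrt_sq (norm_nonneg _)] at this
end

section
/- In the setting of the Petrov–Galerkin scheme: if u ∈ H and u_nc ∈ W satisfy ⟨u − u_nc, J w⟩ = 0 for all w ∈ W, then the interpolation error part satisfies ‖I u − u_nc‖ ≤ Λ₀ · ‖u − I u‖, where Λ₀ := sup over nonzero w ∈ W of ‖w − J w‖/‖w‖. -/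
/-!
Write `e := I u - u_nc ∈ W`. Galerkin orthogonality against `J e`, orthogonality of `u - I u` to
`W`, and orthogonality of `e - J e` to `W` (because `I (J e) = e`) combine to
`‖e‖² = ⟪u - I u, e - J e⟫`. Cauchy–Schwarz and `‖e - J e‖ ≤ Λ₀ ‖e‖` then give
`‖e‖² ≤ Λ₀ ‖u - I u‖ ‖e‖`, and one divides by `‖e‖`.
-/

open RealInnerProductSpace

section PetrovGalerkin

variable {H : Type*} [NormedAddCommGroup H] [InnerProductSpace ℝ H] {W : Submodule ℝ H}
  {I : H →ₗ[ℝ] W} {J : W → H}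

theorem inner_sub_rightInverse_eq_zero (hI : ∀ (v : H) (w : W), ⟪v - (I v : H), (w : H)⟫ = 0)
    (hJ : ∀ w : W, I (J w) = w) (x w : W) : ⟪(x : H) - J x, (w : H)⟫ = 0 := by
  rw [← neg_sub, inner_neg_left, neg_eq_zero]
  simpa only [hJ] using hI (J x) w

theorem norm_sq_eq_inner_interpolation_error
    (hI : ∀ (v : H) (w : W), ⟪v - (I v : H), (w : H)⟫ = 0) (hJ : ∀ w : W, I (J w) = w)
    (u : H) (unc : W) (h : ⟪u - (unc : H), J (I u - unc)⟫ = 0) :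
    ‖(I u - unc : W)‖ ^ 2 = ⟪u - (I u : H), ((I u - unc : W) : H) - J (I u - unc)⟫ := by
  set e : W := I u - unc with he
  have hu_perp : ⟪u - (I u : H), (e : H)⟫ = 0 := hI u e
  have he_perp : ⟪(e : H) - J e, (e : H)⟫ = 0 := inner_sub_rightInverse_eq_zero hI hJ e e
  have he_split : u - (unc : H) = (u - I u) + e := by
    rw [he, Submodule.coe_sub]; abel
  rw [he_split, inner_add_left] at h
  rw [show ‖e‖ = ‖(e : H)‖ from rfl, ← real_inner_self_eq_norm_sq, inner_sub_right, hu_perp]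
  rw [inner_sub_left, sub_eq_zero] at he_perp
  rw [real_inner_comm (J e) (e : H)] at h
  linarith

end PetrovGalerkin

theorem le_of_sq_le_mul {x c : ℝ} (hc : 0 ≤ c) (h : x ^ 2 ≤ c * x) : x ≤ c := by
  by_contra! hcx
  nlinarith [mul_lt_mul_of_pos_right hcx (hc.trans_lt hcx)]

theorem petrovGalerkin_discrete_error_general {H : Type*} [NormedAddCommGroup H] [InnerProductSpace ℝ H]
    (W : Submodule ℝ H)
    (I : H →ₗ[ℝ] W) (hI : ∀ (v : H) (w : W), ⟪v - (I v : H), (w : H)⟫ = 0)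
    (J : W →L[ℝ] H) (hJ : ∀ w : W, I (J w) = w)
    (u : H) (unc : W) (h : ∀ w : W, ⟪u - (unc : H), J w⟫ = 0) :
    ‖(I u : H) - (unc : H)‖ ≤ ‖W.subtypeL - J‖ * ‖u - (I u : H)‖ := by
  set e : W := I u - unc
  have hconsistency : ‖(e : H) - J e‖ ≤ ‖W.subtypeL - J‖ * ‖e‖ := (W.subtypeL - J).le_opNorm e
  have hsq : ‖e‖ ^ 2 ≤ (‖W.subtypeL - J‖ * ‖u - (I u : H)‖) * ‖e‖ :=
    calc ‖e‖ ^ 2 = ⟪u - (I u : H), (e : H) - J e⟫ :=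
          norm_sq_eq_inner_interpolation_error hI hJ u unc (h e)
      _ ≤ ‖u - (I u : H)‖ * ‖(e : H) - J e‖ := real_inner_le_norm _ _
      _ ≤ ‖u - (I u : H)‖ * (‖W.subtypeL - J‖ * ‖e‖) := by gcongr
      _ = (‖W.subtypeL - J‖ * ‖u - (I u : H)‖) * ‖e‖ := by ring
  simpa [e] using le_of_sq_le_mul (by positivity) hsq

/-- The discrete part of the Petrov–Galerkin error: `‖I u - u_nc‖ ≤ Λ₀ ‖u - I u‖`. -/
theorem petrovGalerkin_discrete_error {H : Type*} [NormedAddCommGroup H] [InnerProductSpace ℝ H]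
    [CompleteSpace H] (W : Submodule ℝ H) [FiniteDimensional ℝ W]
    (I : H →ₗ[ℝ] W) (hI : ∀ (v : H) (w : W), ⟪v - (I v : H), (w : H)⟫ = 0)
    (J : W →L[ℝ] H) (hJ : ∀ w : W, I (J w) = w)
    (u : H) (unc : W) (h : ∀ w : W, ⟪u - (unc : H), J w⟫ = 0) :
    ‖(I u : H) - (unc : H)‖ ≤ ‖W.subtypeL - J‖ * ‖u - (I u : H)‖ :=
  petrovGalerkin_discrete_error_general W I hI J hJ u unc h
end

section
/- Let H be a real Hilbert space, W a nonzero finite-dimensional subspace, I the orthogonal projection onto W, and J : W → H a linear right-inverse of I with Λ₀ := ‖id − J‖_{L(W;H)} > 0. Then the constant √(1 + Λ₀²) in the quasi-optimality estimate is attained: there exist u ∈ H and u_nc ∈ W with ⟨u − u_nc, J w⟩ = 0 for all w ∈ W, such that ‖u − u_nc‖ = √(1 + Λ₀²) · ‖u − I u‖ > 0. (One may take u = −J v for a maximizer v of ‖v − J v‖ on the unit sphere of W; then u_nc = −(1 + Λ₀²) v.) -/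
open RealInnerProductSpace

set_option maxHeartbeats 1000000 in
/-- The quasi-optimality constant `√(1 + Λ₀²)` is attained. -/
theorem petrovGalerkin_constant_attained {H : Type*} [NormedAddCommGroup H]
    [InnerProductSpace ℝ H] [CompleteSpace H] (W : Submodule ℝ H) [FiniteDimensional ℝ W]
    (hW : W ≠ ⊥)
    (I : H →ₗ[ℝ] W) (hI : ∀ (v : H) (w : W), ⟪v - (I v : H), (w : H)⟫ = 0)
    (J : W →L[ℝ] H) (hJ : ∀ w : W, I (J w) = w)
    (hΛ : 0 < ‖W.subtypeL - J‖) :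
    ∃ (u : H) (unc : W), (∀ w : W, ⟪u - (unc : H), J w⟫ = 0) ∧
      ‖u - (unc : H)‖ = Real.sqrt (1 + ‖W.subtypeL - J‖ ^ 2) * ‖u - (I u : H)‖ ∧
      0 < ‖u - (unc : H)‖ := by
  set K : W →L[ℝ] H := W.subtypeL - J with hKdef
  set Λ : ℝ := ‖K‖ with hΛdef
  -- I fixes W
  have hIW : ∀ w : W, I (w : H) = w := by
    intro w
    have h := hI (w : H) (w - I (w : H))
    have hcoe : ((w : H) - (I (w : H) : H)) = (((w - I (w : H)) : W) : H) := by
      push_cast; ring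
    rw [hcoe, ← Submodule.coe_inner, inner_self_eq_zero] at h
    exact (sub_eq_zero.mp h).symm
  -- K maps into W^⊥
  have hKperp : ∀ (v : W) (x : W), ⟪K v, (x : H)⟫ = 0 := by
    intro v x
    have hIKv : I (K v) = 0 := by
      simp only [hKdef, ContinuousLinearMap.sub_apply, Submodule.subtypeL_apply]
      rw [map_sub, hIW v, hJ v, sub_self]
    have h := hI (K v) x
    rwa [hIKv, Submodule.coe_zero, sub_zero] at h
  have hKperp' : ∀ (v : W) (x : W), ⟪(x : H), K v⟫ = 0 := fun v x => by
    rw [real_inner_comm]; exact hKperp v x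
  -- maximizer on the unit sphere
  obtain ⟨v₀, hv₀W⟩ : ∃ v : W, v ≠ 0 := by
    rcases Submodule.exists_mem_ne_zero_of_ne_bot hW with ⟨x, hx, hx0⟩
    exact ⟨⟨x, hx⟩, fun h => hx0 (congrArg Subtype.val h)⟩
  have hsphne : (Metric.sphere (0 : W) 1).Nonempty :=
    ⟨‖v₀‖⁻¹ • v₀, by
      have h := norm_ne_zero_iff.mpr hv₀W
      simp only [Metric.mem_sphere, dist_zero_right, norm_smul, norm_inv, norm_norm]
      exact inv_mul_cancel₀ h⟩
  obtain ⟨v, hvs, hvmax⟩ :=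
    (isCompact_sphere (0 : W) 1).exists_isMaxOn hsphne
      (Continuous.continuousOn (K.continuous.norm))
  have hv1 : ‖v‖ = 1 := by simpa using hvs
  have hvne : v ≠ 0 := by intro h; rw [h] at hv1; simp at hv1
  -- ‖K v‖ = Λ
  have hKvΛ : ‖K v‖ = Λ := by
    apply le_antisymm
    · simpa [hv1] using K.le_opNorm v
    · apply ContinuousLinearMap.opNorm_le_bound _ (norm_nonneg _)
      intro x
      rcases eq_or_ne x 0 with rfl | hx
      · simp
      · have hxn : ‖x‖ ≠ 0 := norm_ne_zero_iff.mpr hx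
        have hmem : ‖x‖⁻¹ • x ∈ Metric.sphere (0 : W) 1 := by
          simp only [Metric.mem_sphere, dist_zero_right, norm_smul, norm_inv, norm_norm]
          exact inv_mul_cancel₀ hxn
        have := hvmax hmem
        simp only [Set.mem_setOf_eq, map_smul, norm_smul, norm_inv, norm_norm] at this
        calc ‖K x‖ = ‖x‖ * (‖x‖⁻¹ * ‖K x‖) := by
              rw [← mul_assoc, mul_inv_cancel₀ hxn, one_mul]
          _ ≤ ‖x‖ * ‖K v‖ := by
              apply mul_le_mul_of_nonneg_left _ (norm_nonneg _)
              simpa using this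
          _ = ‖K v‖ * ‖x‖ := mul_comm _ _
  -- the self-adjoint operator T = K† K
  set T : W →L[ℝ] W := ContinuousLinearMap.adjoint K ∘L K with hTdef
  have hTsa : IsSelfAdjoint T := by
    rw [IsSelfAdjoint, ContinuousLinearMap.star_eq_adjoint, hTdef,
      ContinuousLinearMap.adjoint_comp, ContinuousLinearMap.adjoint_adjoint]
  have hTinner : ∀ x y : W, ⟪T x, y⟫ = ⟪K x, K y⟫ := by
    intro x y
    simp only [hTdef, ContinuousLinearMap.comp_apply]
    rw [ContinuousLinearMap.adjoint_inner_left]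
  have hreapply : ∀ x : W, T.reApplyInnerSelf x = ‖K x‖ ^ 2 := by
    intro x
    rw [ContinuousLinearMap.reApplyInnerSelf_apply]
    have : ⟪T x, x⟫ = ‖K x‖ ^ 2 := by
      rw [hTinner, real_inner_self_eq_norm_sq]
    simpa using this
  -- v is an eigenvector of T with eigenvalue Λ²
  have hextr : IsLocalExtrOn T.reApplyInnerSelf (Metric.sphere (0 : W) ‖v‖) v := by
    apply Or.inr
    apply IsMaxOn.localize
    intro x hx
    rw [hv1] at hx
    simp only [Set.mem_setOf_eq, hreapply]
    have := hvmax hx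
    exact pow_le_pow_left₀ (norm_nonneg _) this 2
  have heig : T v = Λ ^ 2 • v := by
    have h := hTsa.eq_smul_self_of_isLocalExtrOn hextr
    have hray : T.rayleighQuotient v = Λ ^ 2 := by
      rw [ContinuousLinearMap.rayleighQuotient, hreapply, hv1, hKvΛ]
      simp
    rwa [hray] at h
  have hKK : ∀ w : W, ⟪K v, K w⟫ = Λ ^ 2 * ⟪(v : H), (w : H)⟫ := by
    intro w
    rw [← hTinner, heig, inner_smul_left, RCLike.conj_to_real, Submodule.coe_inner]
  -- define u and unc
  refine ⟨-(J v), -((1 + Λ ^ 2) • v), ?_, ?_, ?_⟩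
  case _ =>
    intro w
    have hdiff : -(J v) - ((-((1 + Λ ^ 2) • v) : W) : H) = K v + Λ ^ 2 • (v : H) := by
      simp only [hKdef, ContinuousLinearMap.sub_apply, Submodule.subtypeL_apply,
        Submodule.coe_neg, Submodule.coe_smul]
      module
    rw [hdiff]
    have hJw : J w = (w : H) - K w := by
      simp only [hKdef, ContinuousLinearMap.sub_apply, Submodule.subtypeL_apply]; abel
    rw [hJw, inner_add_left, inner_sub_right, inner_sub_right, inner_smul_left,
      inner_smul_left, hKperp v w, hKK w, hKperp' w v, RCLike.conj_to_real]
    ring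
  case _ =>
    have hdiff : -(J v) - ((-((1 + Λ ^ 2) • v) : W) : H) = K v + Λ ^ 2 • (v : H) := by
      simp only [hKdef, ContinuousLinearMap.sub_apply, Submodule.subtypeL_apply,
        Submodule.coe_neg, Submodule.coe_smul]
      module
    have hIu : I (-(J v)) = -v := by rw [map_neg, hJ]
    have hdiff2 : -(J v) - ((I (-(J v)) : W) : H) = K v := by
      rw [hIu]
      simp only [hKdef, ContinuousLinearMap.sub_apply, Submodule.subtypeL_apply,
        Submodule.coe_neg]
      abel
    rw [hdiff, hdiff2, hKvΛ]
    have hortho : ⟪K v, Λ ^ 2 • (v : H)⟫ = 0 := by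
      rw [inner_smul_right, hKperp v v, mul_zero]
    have hsq : ‖K v + Λ ^ 2 • (v : H)‖ ^ 2 = Λ ^ 2 + Λ ^ 4 := by
      rw [norm_add_sq_real, hortho, hKvΛ, norm_smul]
      have : ‖(v : H)‖ = 1 := by rwa [← Submodule.norm_coe] at hv1
      rw [this]
      simp [abs_of_nonneg (sq_nonneg Λ)]
      ring
    have h1 : ‖K v + Λ ^ 2 • (v : H)‖ = Real.sqrt (Λ ^ 2 + Λ ^ 4) := by
      rw [← hsq, Real.sqrt_sq (norm_nonneg _)]
    rw [h1]
    have : Λ ^ 2 + Λ ^ 4 = (1 + Λ ^ 2) * Λ ^ 2 := by ring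
    rw [this, Real.sqrt_mul (by positivity), Real.sqrt_sq hΛ.le]
  case _ =>
    have hdiff : -(J v) - ((-((1 + Λ ^ 2) • v) : W) : H) = K v + Λ ^ 2 • (v : H) := by
      simp only [hKdef, ContinuousLinearMap.sub_apply, Submodule.subtypeL_apply,
        Submodule.coe_neg, Submodule.coe_smul]
      module
    rw [hdiff]
    have hortho : ⟪K v, Λ ^ 2 • (v : H)⟫ = 0 := by
      rw [inner_smul_right, hKperp v v, mul_zero]
    have hsq : ‖K v + Λ ^ 2 • (v : H)‖ ^ 2 = Λ ^ 2 + Λ ^ 4 := by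
      rw [norm_add_sq_real, hortho, hKvΛ, norm_smul]
      have : ‖(v : H)‖ = 1 := by rwa [← Submodule.norm_coe] at hv1
      rw [this]
      simp [abs_of_nonneg (sq_nonneg Λ)]
      ring
    have : (0:ℝ) < Λ ^ 2 + Λ ^ 4 := by positivity
    nlinarith [norm_nonneg (K v + Λ ^ 2 • (v : H))]
end

section
/- Let T ⊆ ℝ² be a nonempty open connected set and w = (w₁, w₂) : T → ℝ² a C² vector field with sym Curl w = 0, i.e. ∂w₁/∂x₂ = 0, ∂w₂/∂x₁ = 0, and ∂w₁/∂x₁ = ∂w₂/∂x₂ almost everywhere (everywhere, by continuity) in T. Then there is a polynomial β of total degree at most 2 on T with (w₂, w₁) = ∇β; in particular w is an affine (degree ≤ 1) vector field on T. -/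
/-!
By symmetry of second derivatives, `∂₁∂₁w₁ = ∂₁∂₂w₂ = ∂₂∂₁w₂ = 0` and `∂₂∂₁w₁ = ∂₁∂₂w₁ = 0`, so
`∂₁w₁ = ∂₂w₂` is a constant `k` on the connected set `T`. Hence `Dw₁ = k dx₁` and `Dw₂ = k dx₂`,
i.e. `w₁ = a + k x₁`, `w₂ = b + k x₂`, and `β = b x₁ + a x₂ + k x₁ x₂`.
-/

open Set Filter Topology

section SecondDerivatives

variable {𝕜 E F : Type*} [NontriviallyNormedField 𝕜] [NormedAddCommGroup E] [NormedSpace 𝕜 E]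
  [NormedAddCommGroup F] [NormedSpace 𝕜 F] {f : E → F} {x : E}

theorem fderiv_fderiv_apply (hf : DifferentiableAt 𝕜 (fderiv 𝕜 f) x) (u v : E) :
    fderiv 𝕜 (fun y => fderiv 𝕜 f y u) x v = fderiv 𝕜 (fderiv 𝕜 f) x v u := by
  simp [fderiv_clm_apply hf (differentiableAt_const u)]

theorem ContDiffAt.fderiv_fderiv_apply_comm [IsRCLikeNormedField 𝕜] (hf : ContDiffAt 𝕜 2 f x)
    (u v : E) :
    fderiv 𝕜 (fun y => fderiv 𝕜 f y u) x v = fderiv 𝕜 (fun y => fderiv 𝕜 f y v) x u := by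
  have hf' := (hf.fderiv_right (m := 1) le_rfl).differentiableAt one_ne_zero
  rw [fderiv_fderiv_apply hf', fderiv_fderiv_apply hf', hf.isSymmSndFDerivAt (by simp)]

end SecondDerivatives

theorem ContinuousLinearMap.prod_ext_ring {R M : Type*} [Semiring R] [TopologicalSpace R]
    [AddCommMonoid M] [Module R M] [TopologicalSpace M] {f g : R × R →L[R] M}
    (h₁ : f (1, 0) = g (1, 0)) (h₂ : f (0, 1) = g (0, 1)) : f = g :=
  prod_ext (ext_ring (by simpa using h₁)) (ext_ring (by simpa using h₂))

theorem IsOpen.eqOn_add_of_fderiv_eq_const {E F : Type*} [NormedAddCommGroup E] [NormedSpace ℝ E]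
    [NormedAddCommGroup F] [NormedSpace ℝ F] {f : E → F} {s : Set E} {x₀ : E} {L : E →L[ℝ] F}
    (hs : IsOpen s) (hs' : IsPreconnected s) (hf : DifferentiableOn ℝ f s)
    (hf' : ∀ x ∈ s, fderiv ℝ f x = L) (hx₀ : x₀ ∈ s) :
    EqOn f (fun x => f x₀ + L (x - x₀)) s := by
  refine hs.eqOn_of_fderiv_eq hs' hf (by fun_prop) (fun x hx => ?_) hx₀ (by simp)
  rw [hf' x hx, fderiv_const_add, fderiv_comp_sub, L.fderiv]

theorem fderiv_fderiv_apply_fst_eq_zero_of_symCurl_eq_zero {𝕜 F : Type*} [NontriviallyNormedField 𝕜]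
    [IsRCLikeNormedField 𝕜] [NormedAddCommGroup F] [NormedSpace 𝕜 F] {T : Set (𝕜 × 𝕜)}
    (hT : IsOpen T) {w₁ w₂ : 𝕜 × 𝕜 → F} (hw₁ : ContDiffOn 𝕜 2 w₁ T) (hw₂ : ContDiffOn 𝕜 2 w₂ T)
    (h12 : ∀ x ∈ T, fderiv 𝕜 w₁ x (0, 1) = 0) (h21 : ∀ x ∈ T, fderiv 𝕜 w₂ x (1, 0) = 0)
    (h11 : ∀ x ∈ T, fderiv 𝕜 w₁ x (1, 0) = fderiv 𝕜 w₂ x (0, 1)) {x : 𝕜 × 𝕜} (hx : x ∈ T) :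
    fderiv 𝕜 (fun y => fderiv 𝕜 w₁ y (1, 0)) x = 0 := by
  have hT_nhds : T ∈ 𝓝 x := hT.mem_nhds hx
  have hfderiv_zero {w : 𝕜 × 𝕜 → F} {e : 𝕜 × 𝕜} (h : ∀ y ∈ T, fderiv 𝕜 w y e = 0) :
      fderiv 𝕜 (fun y => fderiv 𝕜 w y e) x = 0 := by
    rw [(eventuallyEq_of_mem hT_nhds h).fderiv_eq, fderiv_const_apply]
  refine ContinuousLinearMap.prod_ext_ring ?_ ?_
  · calc fderiv 𝕜 (fun y => fderiv 𝕜 w₁ y (1, 0)) x (1, 0)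
        = fderiv 𝕜 (fun y => fderiv 𝕜 w₂ y (0, 1)) x (1, 0) := by
          rw [(eventuallyEq_of_mem hT_nhds h11).fderiv_eq]
      _ = fderiv 𝕜 (fun y => fderiv 𝕜 w₂ y (1, 0)) x (0, 1) :=
          (hw₂.contDiffAt hT_nhds).fderiv_fderiv_apply_comm _ _
      _ = 0 := by rw [hfderiv_zero h21]; rfl
  · calc fderiv 𝕜 (fun y => fderiv 𝕜 w₁ y (1, 0)) x (0, 1)
        = fderiv 𝕜 (fun y => fderiv 𝕜 w₁ y (0, 1)) x (1, 0) :=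
          (hw₁.contDiffAt hT_nhds).fderiv_fderiv_apply_comm _ _
      _ = 0 := by rw [hfderiv_zero h12]; rfl

/-- If a `C²` vector field `w = (w₁, w₂)` on a nonempty open connected set `T ⊆ ℝ²`
satisfies `sym Curl w = 0`, i.e. `∂₂ w₁ = 0`, `∂₁ w₂ = 0`, and `∂₁ w₁ = ∂₂ w₂` on `T`,
then `(w₂, w₁) = ∇β` for a polynomial `β` of total degree at most 2; in particular
`w` is affine on `T`. -/
theorem symCurl_zero_implies_affine (T : Set (ℝ × ℝ)) (hT : IsOpen T)
    (hconn : IsConnected T) (w₁ w₂ : ℝ × ℝ → ℝ)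
    (hw₁ : ContDiffOn ℝ 2 w₁ T) (hw₂ : ContDiffOn ℝ 2 w₂ T)
    (h12 : ∀ x ∈ T, fderiv ℝ w₁ x (0, 1) = 0)
    (h21 : ∀ x ∈ T, fderiv ℝ w₂ x (1, 0) = 0)
    (h11 : ∀ x ∈ T, fderiv ℝ w₁ x (1, 0) = fderiv ℝ w₂ x (0, 1)) :
    ∃ (β : ℝ × ℝ → ℝ) (c₀ c₁ c₂ c₁₁ c₁₂ c₂₂ : ℝ),
      (∀ x : ℝ × ℝ, β x = c₀ + c₁ * x.1 + c₂ * x.2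
        + c₁₁ * x.1 ^ 2 + c₁₂ * x.1 * x.2 + c₂₂ * x.2 ^ 2) ∧
      (∀ x ∈ T, w₂ x = c₁ + 2 * c₁₁ * x.1 + c₁₂ * x.2) ∧
      (∀ x ∈ T, w₁ x = c₂ + c₁₂ * x.1 + 2 * c₂₂ * x.2) := by
  obtain ⟨x₀, hx₀⟩ := hconn.nonempty
  have hT' := hconn.isPreconnected
  set k := fderiv ℝ w₁ x₀ (1, 0)
  have hk : ∀ x ∈ T, fderiv ℝ w₁ x (1, 0) = k := fun x hx =>
    hT.is_const_of_fderiv_eq_zero hT'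
      (((hw₁.fderiv_of_isOpen hT le_rfl).clm_apply contDiffOn_const).differentiableOn one_ne_zero)
      (fun _ hy => fderiv_fderiv_apply_fst_eq_zero_of_symCurl_eq_zero hT hw₁ hw₂ h12 h21 h11 hy)
      hx hx₀
  have hDw₁ : ∀ x ∈ T, fderiv ℝ w₁ x = k • ContinuousLinearMap.fst ℝ ℝ ℝ := fun x hx =>
    ContinuousLinearMap.prod_ext_ring (by simp [hk x hx]) (by simp [h12 x hx])
  have hDw₂ : ∀ x ∈ T, fderiv ℝ w₂ x = k • ContinuousLinearMap.snd ℝ ℝ ℝ := fun x hx =>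
    ContinuousLinearMap.prod_ext_ring (by simp [h21 x hx]) (by simp [← h11 x hx, hk x hx])
  have hw₁_eq := hT.eqOn_add_of_fderiv_eq_const hT' (hw₁.differentiableOn two_ne_zero) hDw₁ hx₀
  have hw₂_eq := hT.eqOn_add_of_fderiv_eq_const hT' (hw₂.differentiableOn two_ne_zero) hDw₂ hx₀
  refine ⟨fun x => (w₂ x₀ - k * x₀.2) * x.1 + (w₁ x₀ - k * x₀.1) * x.2 + k * x.1 * x.2,
    0, w₂ x₀ - k * x₀.2, w₁ x₀ - k * x₀.1, 0, k, 0, fun x => by ring,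
    fun x hx => ?_, fun x hx => ?_⟩
  · rw [hw₂_eq hx]
    simp only [smul_apply, ContinuousLinearMap.coe_snd', Prod.snd_sub, smul_eq_mul]
    ring
  · rw [hw₁_eq hx]
    simp only [smul_apply, ContinuousLinearMap.coe_fst', Prod.fst_sub, smul_eq_mul]
    ring
end
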